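/- Every theorem of the normal modal logic S4.1 = K+(T)+(4)+(.1) is valid on the general Kripke frame G_𝔄 = (𝔄, ⇝, Admiss(CTL)) over the class 𝔄 of all transition systems; that is, S4.1 ⊆ MLAR. -/

import Mathlib

/-!
Validity on the frame of all transition systems is closed under modus ponens and necessitation
but not obviously under substitution, as a substituted formula need not denote a CTL-definable
set. Its largest substitution-closed subset is therefore a normal modal logic, and it remains
to check that it contains the three axioms. Since abstraction is a preorder, (T) and (4) hold.
For (.1), unfold a system into its paths with a position: this is a deterministic refinement,
and every refinement of a deterministic system is bisimilar to it. Bisimilar systems satisfy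
the same CTL formulas and have bisimilar refinements, so they agree on every modal formula
under an admissible valuation. Hence if `□◇p` holds at `S`, then `p` holds at the unfolding of
`S` and at all of its refinements, which gives `◇□p` at `S`.
-/

namespace MLAR

/-- Modal formulas over a countably infinite set of propositional variables (indexed by ℕ). -/
inductive MF : Type where
  | top : MF
  | var : ℕ → MF
  | and : MF → MF → MF
  | neg : MF → MF
  | dia : MF → MF

namespace MF

/-- □φ := ¬◇¬φ -/
def box (φ : MF) : MF := neg (dia (neg φ))

/-- Material implication, definable classically from ∧ and ¬. -/
def imp (φ ψ : MF) : MF := neg (and φ (neg ψ))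

/-- Uniform substitution. -/
def subst (σ : ℕ → MF) : MF → MF
  | top => top
  | var p => σ p
  | and φ ψ => and (subst σ φ) (subst σ ψ)
  | neg φ => neg (subst σ φ)
  | dia φ => dia (subst σ φ)

/-- Satisfaction of a modal formula at a world of a Kripke model. -/
def Sat {W : Type*} (R : W → W → Prop) (V : ℕ → Set W) : MF → W → Prop
  | top, _ => True
  | var p, w => w ∈ V p
  | and φ ψ, w => Sat R V φ w ∧ Sat R V ψ w
  | neg φ, w => ¬ Sat R V φ w
  | dia φ, w => ∃ v, R w v ∧ Sat R V φ v

end MF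

/-- A boolean evaluation: respects ⊤, ∧, ¬, treating variables and ◇-formulas as atoms. -/
def IsPropEval (v : MF → Prop) : Prop :=
  v MF.top ∧ (∀ φ ψ, v (MF.and φ ψ) ↔ (v φ ∧ v ψ)) ∧ (∀ φ, v (MF.neg φ) ↔ ¬ v φ)

/-- Propositional tautologies. -/
def IsTautology (φ : MF) : Prop := ∀ v, IsPropEval v → v φ

/-- The K-axiom □(p→q)→(□p→□q). -/
def axK : MF := (((MF.var 0).imp (MF.var 1)).box).imp (((MF.var 0).box).imp ((MF.var 1).box))

/-- Normal modal logics. -/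
def IsNormal (L : Set MF) : Prop :=
  (∀ φ, IsTautology φ → φ ∈ L) ∧
  axK ∈ L ∧
  (∀ φ ψ, φ ∈ L → φ.imp ψ ∈ L → ψ ∈ L) ∧
  (∀ φ σ, φ ∈ L → φ.subst σ ∈ L) ∧
  (∀ φ, φ ∈ L → φ.box ∈ L)

/-- The smallest normal modal logic containing Γ. -/
def KPlus (Γ : Set MF) : Set MF := ⋂₀ {L | IsNormal L ∧ Γ ⊆ L}

/-- (T) = p → ◇p -/
def axT : MF := (MF.var 0).imp ((MF.var 0).dia)
/-- (4) = ◇◇p → ◇p -/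
def ax4 : MF := ((MF.var 0).dia.dia).imp ((MF.var 0).dia)
/-- (.2) = ◇□p → □◇p -/
def axDot2 : MF := ((MF.var 0).box.dia).imp ((MF.var 0).dia.box)
/-- (.1) = □◇p → ◇□p -/
def axDot1 : MF := ((MF.var 0).dia.box).imp ((MF.var 0).box.dia)
/-- Grzegorczyk axiom □(□(p→□p)→p)→p -/
def axGrz : MF := ((((MF.var 0).imp ((MF.var 0).box)).box.imp (MF.var 0)).box).imp (MF.var 0)

def S4 : Set MF := KPlus {axT, ax4}
def S4Dot2 : Set MF := KPlus {axT, ax4, axDot2}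
def S4Dot1 : Set MF := KPlus {axT, ax4, axDot1}
def S4Dot2Dot1 : Set MF := KPlus {axT, ax4, axDot2, axDot1}
def Grz : Set MF := KPlus {axGrz}

/-- Transition systems over a set AP of atomic propositions. -/
structure TS (AP : Type) : Type 1 where
  State : Type
  rel : State → State → Prop
  init : Set State
  label : State → Set AP
  nonempty : Nonempty State
  serial : ∀ s, ∃ t, rel s t

/-- `f` witnesses that T₁ is an abstraction of T₂. -/
def IsAbstractionMap {AP : Type} (T₁ T₂ : TS AP) (f : T₂.State → T₁.State) : Prop :=
  Function.Surjective f ∧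
  (∀ s, T₁.label (f s) = T₂.label s) ∧
  (∀ a b, T₁.rel a b ↔ ∃ s t, T₂.rel s t ∧ f s = a ∧ f t = b) ∧
  T₁.init = f '' T₂.init

/-- `Abs T₁ T₂` : T₁ is an abstraction of T₂ (written T₁ ⇝ T₂; T₂ is a refinement of T₁). -/
def Abs {AP : Type} (T₁ T₂ : TS AP) : Prop := ∃ f, IsAbstractionMap T₁ T₂ f

mutual
/-- CTL state formulas. -/
inductive CTLs (AP : Type) : Type where
  | top : CTLs AP
  | atom : AP → CTLs AP
  | and : CTLs AP → CTLs AP → CTLs AP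
  | neg : CTLs AP → CTLs AP
  | ex : CTLp AP → CTLs AP
  | al : CTLp AP → CTLs AP
/-- CTL path formulas. -/
inductive CTLp (AP : Type) : Type where
  | next : CTLs AP → CTLp AP
  | untl : CTLs AP → CTLs AP → CTLp AP
end

/-- Infinite paths of a transition system. -/
def TS.IsPath {AP : Type} (T : TS AP) (π : ℕ → T.State) : Prop := ∀ i, T.rel (π i) (π (i + 1))

mutual
/-- Satisfaction of CTL state formulas at states. -/
def CTLs.Sat {AP : Type} (T : TS AP) : CTLs AP → T.State → Prop
  | .top, _ => True
  | .atom a, s => a ∈ T.label s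
  | .and φ ψ, s => CTLs.Sat T φ s ∧ CTLs.Sat T ψ s
  | .neg φ, s => ¬ CTLs.Sat T φ s
  | .ex φ, s => ∃ π, T.IsPath π ∧ π 0 = s ∧ CTLp.Sat T φ π
  | .al φ, s => ∀ π, T.IsPath π → π 0 = s → CTLp.Sat T φ π
/-- Satisfaction of CTL path formulas on paths. -/
def CTLp.Sat {AP : Type} (T : TS AP) : CTLp AP → (ℕ → T.State) → Prop
  | .next φ, π => CTLs.Sat T φ (π 1)
  | .untl φ ψ, π => ∃ j, CTLs.Sat T ψ (π j) ∧ ∀ i, i < j → CTLs.Sat T φ (π i)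
end

/-- A transition system satisfies a CTL state formula iff all its initial states do. -/
def TS.sat {AP : Type} (T : TS AP) (Φ : CTLs AP) : Prop := ∀ s ∈ T.init, CTLs.Sat T Φ s

/-- Admissible valuations on the class C: each variable denotes a CTL-expressible set. -/
def AdmissibleVal {AP : Type} (C : Set (TS AP)) (V : ℕ → Set {S : TS AP // S ∈ C}) : Prop :=
  ∀ p, ∃ Φ : CTLs AP, ∀ S : {S : TS AP // S ∈ C}, S ∈ V p ↔ (S : TS AP).sat Φ

/-- The refinement accessibility relation ⇝ on the class C. -/
def refRel {AP : Type} (C : Set (TS AP)) :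
    {S : TS AP // S ∈ C} → {S : TS AP // S ∈ C} → Prop :=
  fun S₁ S₂ => Abs S₁.1 S₂.1

/-- Validity of a modal formula at a world of the general frame (C, ⇝, Admiss(CTL)). -/
def ValidAt {AP : Type} (C : Set (TS AP)) (φ : MF) (S : {S : TS AP // S ∈ C}) : Prop :=
  ∀ V, AdmissibleVal C V → MF.Sat (refRel C) V φ S

/-- Validity on the general frame (C, ⇝, Admiss(CTL)). -/
def ValidOn {AP : Type} (C : Set (TS AP)) (φ : MF) : Prop := ∀ S, ValidAt C φ S

/-- The class of all finite abstractions of T. -/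
def FinAbs {AP : Type} (T : TS AP) : Set (TS AP) := {S | Finite S.State ∧ Abs S T}

/-- The class of all abstractions of T. -/
def AllAbs {AP : Type} (T : TS AP) : Set (TS AP) := {S | Abs S T}

/-- MLAR^fin_T. -/
def MLARfin {AP : Type} (T : TS AP) : Set MF := {φ | ValidOn (FinAbs T) φ}
/-- MLAR^all_T. -/
def MLARall {AP : Type} (T : TS AP) : Set MF := {φ | ValidOn (AllAbs T) φ}
set_option linter.dupNamespace false in
/-- MLAR on the class of all transition systems over the fixed countably infinite AP = ℕ. -/
def MLAR : Set MF := {φ | ValidOn (Set.univ : Set (TS ℕ)) φ}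

/-- Finite partial functions {0,…,n−1} ⇀ {0,1}. -/
def FPF (n : ℕ) : Type := Fin n → Option Bool

/-- g ≼ h iff h extends g. -/
def FPFle {n : ℕ} (g h : FPF n) : Prop := ∀ i x, g i = some x → h i = some x

/-- The modal logic of all finite partial function posets. -/
def S4FPF : Set MF := {φ | ∀ n : ℕ, ∀ V : ℕ → Set (FPF n), ∀ w, MF.Sat FPFle V φ w}

/-- Admissible-set algebra of a general Kripke frame:
closed under complements and finite (including empty and binary) unions. -/
def IsGeneralFrameAdmiss {W : Type*} (𝒜 : Set (Set W)) : Prop :=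
  (∅ : Set W) ∈ 𝒜 ∧ (∀ A ∈ 𝒜, Aᶜ ∈ 𝒜) ∧ (∀ A ∈ 𝒜, ∀ B ∈ 𝒜, A ∪ B ∈ 𝒜)

/-- Formulas valid at a world of a general Kripke frame (W, R, 𝒜). -/
def GValidAt {W : Type*} (R : W → W → Prop) (𝒜 : Set (Set W)) (φ : MF) (c : W) : Prop :=
  ∀ V : ℕ → Set W, (∀ p, V p ∈ 𝒜) → MF.Sat R V φ c

/-- A is a pure button at c: □(b→□b) and □◇b hold at c under V(b) = A. -/
def PureButton {W : Type*} (R : W → W → Prop) (c : W) (A : Set W) : Prop :=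
  (∀ d, R c d → d ∈ A → ∀ e, R d e → e ∈ A) ∧ (∀ d, R c d → ∃ e, R d e ∧ e ∈ A)

/-- A is a pure weak button at c: □(b→□b) and ◇b hold at c under V(b) = A. -/
def PureWeakButton {W : Type*} (R : W → W → Prop) (c : W) (A : Set W) : Prop :=
  (∀ d, R c d → d ∈ A → ∀ e, R d e → e ∈ A) ∧ (∃ e, R c e ∧ e ∈ A)

/-- B is a switch at c: □(◇s ∧ ◇¬s) holds at c under V(s) = B. -/
def IsSwitch {W : Type*} (R : W → W → Prop) (c : W) (B : Set W) : Prop :=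
  ∀ d, R c d → (∃ e, R d e ∧ e ∈ B) ∧ (∃ e, R d e ∧ e ∉ B)

/-- C is a B-restricted switch at c:
□(¬B → (◇(s ∧ ¬B) ∧ ◇(¬s ∧ ¬B))) holds at c under V(s) = C. -/
def RestrictedSwitch {W : Type*} (R : W → W → Prop) (c : W) (B C : Set W) : Prop :=
  ∀ d, R c d → d ∉ B →
    (∃ e, R d e ∧ e ∈ C ∧ e ∉ B) ∧ (∃ e, R d e ∧ e ∉ C ∧ e ∉ B)

/-- Independence of unpushed pure buttons A and switches B at c. -/
def Independent {W : Type*} (R : W → W → Prop) (c : W) {n m : ℕ}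
    (A : Fin n → Set W) (B : Fin m → Set W) : Prop :=
  ∀ (I₀ I₁ : Set (Fin n)) (J₀ J₁ : Set (Fin m)), I₀ ⊆ I₁ →
    ∀ d, R c d →
      ((∀ i, i ∈ I₀ ↔ d ∈ A i) ∧ (∀ j, j ∈ J₀ ↔ d ∈ B j)) →
      ∃ e, R d e ∧ (∀ i, i ∈ I₁ ↔ e ∈ A i) ∧ (∀ j, j ∈ J₁ ↔ e ∈ B j)

/-- Independence until B of pure buttons A and B-restricted switches C at c. -/
def IndependentUntil {W : Type*} (R : W → W → Prop) (c : W) (Bb : Set W) {n m : ℕ}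
    (A : Fin n → Set W) (C : Fin m → Set W) : Prop :=
  ∀ (I₀ I₁ : Set (Fin n)) (J₀ J₁ : Set (Fin m)), I₀ ⊆ I₁ →
    ∀ d, R c d →
      ((∀ i, i ∈ I₀ ↔ d ∈ A i) ∧ (∀ j, j ∈ J₀ ↔ d ∈ C j) ∧ d ∉ Bb) →
      ∃ e, R d e ∧ (∀ i, i ∈ I₁ ↔ e ∈ A i) ∧ (∀ j, j ∈ J₁ ↔ e ∈ C j) ∧ e ∉ Bb

/-- (L, Rr) is a decision at c: a pair of mutually exclusive unpushed pure weak buttons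
whose union is an unpushed pure button, with □(¬l ∨ ¬r) and □((◇l ∧ ◇r) ∨ l ∨ r) at c. -/
def Decision {W : Type*} (R : W → W → Prop) (c : W) (L Rr : Set W) : Prop :=
  PureWeakButton R c L ∧ c ∉ L ∧
  PureWeakButton R c Rr ∧ c ∉ Rr ∧
  PureButton R c (L ∪ Rr) ∧ c ∉ L ∪ Rr ∧
  (∀ d, R c d → ¬(d ∈ L ∧ d ∈ Rr)) ∧
  (∀ d, R c d → (((∃ e, R d e ∧ e ∈ L) ∧ (∃ e, R d e ∧ e ∈ Rr)) ∨ d ∈ L ∨ d ∈ Rr))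

/-- Independence of decisions at c. -/
def IndependentDecisions {W : Type*} (R : W → W → Prop) (c : W) {n : ℕ}
    (L Rr : Fin n → Set W) : Prop :=
  ∀ (I₀ I₁ J₀ J₁ : Set (Fin n)), I₀ ⊆ I₁ → J₀ ⊆ J₁ → (∀ i ∈ J₁, i ∉ I₁) →
    ∀ d, R c d →
      ((∀ i, i ∈ I₀ ↔ d ∈ L i) ∧ (∀ i, i ∈ J₀ ↔ d ∈ Rr i)) →
      ∃ e, R d e ∧ (∀ i, i ∈ I₁ ↔ e ∈ L i) ∧ (∀ i, i ∈ J₁ ↔ e ∈ Rr i)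


namespace MF

section Semantics

variable {W : Type*} {R : W → W → Prop} {V : ℕ → Set W} {φ ψ : MF} {w : W}

theorem sat_imp : Sat R V (φ.imp ψ) w ↔ (Sat R V φ w → Sat R V ψ w) := by
  simp only [imp, Sat]; tauto

theorem sat_box : Sat R V φ.box w ↔ ∀ v, R w v → Sat R V φ v := by
  simp only [box, Sat, not_exists, not_and, not_not]

theorem sat_subst_of_isTautology (h : IsTautology φ) (σ : ℕ → MF) :
    Sat R V (φ.subst σ) w :=
  h (fun χ => Sat R V (χ.subst σ) w) ⟨trivial, fun _ _ => Iff.rfl, fun _ => Iff.rfl⟩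

theorem sat_subst_axK (σ : ℕ → MF) : Sat R V (axK.subst σ) w := by
  change Sat R V ((((σ 0).imp (σ 1)).box).imp (((σ 0).box).imp ((σ 1).box))) w
  simp only [sat_imp, sat_box]
  exact fun himp hφ v hv => himp v hv (hφ v hv)

theorem sat_imp_dia_of_refl (hR : ∀ v, R v v) : Sat R V (φ.imp φ.dia) w :=
  sat_imp.2 fun h => ⟨w, hR w, h⟩

theorem sat_dia_dia_imp_dia_of_trans (hR : ∀ u v x, R u v → R v x → R u x) :
    Sat R V (φ.dia.dia.imp φ.dia) w :=
  sat_imp.2 fun ⟨_, huv, x, hvx, h⟩ => ⟨x, hR _ _ _ huv hvx, h⟩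

end Semantics

theorem subst_subst (σ τ : ℕ → MF) (φ : MF) :
    (φ.subst τ).subst σ = φ.subst (fun p => (τ p).subst σ) := by
  induction φ <;> simp only [subst, *]

theorem subst_var (φ : MF) : φ.subst var = φ := by
  induction φ <;> simp only [subst, *]

end MF

theorem KPlus_subset {Γ L : Set MF} (hL : IsNormal L) (hΓ : Γ ⊆ L) : KPlus Γ ⊆ L :=
  Set.sInter_subset_of_mem ⟨hL, hΓ⟩

def substCore (L : Set MF) : Set MF := {φ | ∀ σ, φ.subst σ ∈ L}

theorem substCore_subset (L : Set MF) : substCore L ⊆ L :=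
  fun φ hφ => MF.subst_var φ ▸ hφ MF.var

section Validity

variable {AP : Type}

theorem ValidOn.mp {C : Set (TS AP)} {φ ψ : MF} (hφ : ValidOn C φ)
    (himp : ValidOn C (φ.imp ψ)) : ValidOn C ψ :=
  fun S V hV => MF.sat_imp.1 (himp S V hV) (hφ S V hV)

theorem ValidOn.box {C : Set (TS AP)} {φ : MF} (hφ : ValidOn C φ) : ValidOn C φ.box :=
  fun _ V hV => MF.sat_box.2 fun T _ => hφ T V hV

theorem isNormal_substCore_validOn (C : Set (TS AP)) :
    IsNormal (substCore {φ | ValidOn C φ}) := by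
  refine ⟨fun φ hφ σ _ _ _ => MF.sat_subst_of_isTautology hφ σ,
    fun σ _ _ _ => MF.sat_subst_axK σ,
    fun φ ψ hφ himp σ => (hφ σ).mp (himp σ),
    fun φ σ hφ τ => ?_, fun φ hφ σ => (hφ σ).box⟩
  rw [MF.subst_subst]
  exact hφ _

end Validity

theorem Abs.refl {AP : Type} (T : TS AP) : Abs T T :=
  ⟨id, Function.surjective_id, fun _ => rfl,
    fun a b => ⟨fun h => ⟨a, b, h, rfl, rfl⟩, fun ⟨_, _, h, ha, hb⟩ => ha ▸ hb ▸ h⟩,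
    (Set.image_id _).symm⟩

theorem Abs.trans {AP : Type} {T₁ T₂ T₃ : TS AP} (h₁₂ : Abs T₁ T₂) (h₂₃ : Abs T₂ T₃) :
    Abs T₁ T₃ := by
  obtain ⟨f, hf_surj, hf_label, hf_rel, hf_init⟩ := h₁₂
  obtain ⟨g, hg_surj, hg_label, hg_rel, hg_init⟩ := h₂₃
  refine ⟨f ∘ g, hf_surj.comp hg_surj, fun s => (hf_label (g s)).trans (hg_label s),
    fun a b => ⟨fun h => ?_, ?_⟩, by rw [hf_init, hg_init, Set.image_image]; rfl⟩
  · obtain ⟨s, t, hst, rfl, rfl⟩ := (hf_rel a b).1 h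
    obtain ⟨s', t', hst', rfl, rfl⟩ := (hg_rel s t).1 hst
    exact ⟨s', t', hst', rfl, rfl⟩
  · rintro ⟨s, t, hst, rfl, rfl⟩
    exact (hf_rel _ _).2 ⟨g s, g t, (hg_rel _ _).2 ⟨s, t, hst, rfl, rfl⟩, rfl, rfl⟩

theorem refRel_refl {AP : Type} (C : Set (TS AP)) (S : {S : TS AP // S ∈ C}) :
    refRel C S S :=
  Abs.refl S.1

theorem refRel_trans {AP : Type} (C : Set (TS AP)) (S T U : {S : TS AP // S ∈ C}) :
    refRel C S T → refRel C T U → refRel C S U :=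
  Abs.trans

section Bisimulation

variable {AP : Type}

structure IsBisimulation (T U : TS AP) (Z : T.State → U.State → Prop) : Prop where
  label_eq : ∀ t u, Z t u → T.label t = U.label u
  left_total : ∀ t, ∃ u, Z t u
  right_total : ∀ u, ∃ t, Z t u
  forth : ∀ t u t', Z t u → T.rel t t' → ∃ u', U.rel u u' ∧ Z t' u'
  back : ∀ t u u', Z t u → U.rel u u' → ∃ t', T.rel t t' ∧ Z t' u'
  init_left : ∀ t ∈ T.init, ∃ u ∈ U.init, Z t u
  init_right : ∀ u ∈ U.init, ∃ t ∈ T.init, Z t u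

def Bisimilar (T U : TS AP) : Prop := ∃ Z, IsBisimulation T U Z

variable {T U : TS AP} {Z : T.State → U.State → Prop}

theorem IsBisimulation.symm (hZ : IsBisimulation T U Z) :
    IsBisimulation U T (fun u t => Z t u) where
  label_eq u t h := (hZ.label_eq t u h).symm
  left_total := hZ.right_total
  right_total := hZ.left_total
  forth u t u' := hZ.back t u u'
  back u t t' := hZ.forth t u t'
  init_left := hZ.init_right
  init_right := hZ.init_left

theorem Bisimilar.symm (h : Bisimilar T U) : Bisimilar U T :=
  let ⟨_, hZ⟩ := h; ⟨_, hZ.symm⟩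

theorem IsBisimulation.exists_path (hZ : IsBisimulation T U Z) {π : ℕ → T.State}
    (hπ : T.IsPath π) {u : U.State} (h₀ : Z (π 0) u) :
    ∃ ρ : ℕ → U.State, U.IsPath ρ ∧ ρ 0 = u ∧ ∀ i, Z (π i) (ρ i) := by
  have step : ∀ n (v : {v // Z (π n) v}), ∃ v', U.rel v.1 v' ∧ Z (π (n + 1)) v' :=
    fun n v => hZ.forth _ _ _ v.2 (hπ n)
  let ρ : ∀ n, {v // Z (π n) v} :=
    fun n => Nat.rec ⟨u, h₀⟩ (fun n v => ⟨(step n v).choose, (step n v).choose_spec.2⟩) n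
  exact ⟨fun n => (ρ n).1, fun n => (step n (ρ n)).choose_spec.1, rfl, fun n => (ρ n).2⟩

mutual

theorem IsBisimulation.ctls_sat_iff (hZ : IsBisimulation T U Z) :
    ∀ (Φ : CTLs AP) {t u}, Z t u → (CTLs.Sat T Φ t ↔ CTLs.Sat U Φ u)
  | .top, _, _, _ => Iff.rfl
  | .atom a, t, u, h => by simp only [CTLs.Sat, hZ.label_eq t u h]
  | .and Φ Ψ, _, _, h => and_congr (hZ.ctls_sat_iff Φ h) (hZ.ctls_sat_iff Ψ h)
  | .neg Φ, _, _, h => not_congr (hZ.ctls_sat_iff Φ h)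
  | .ex φ, _, _, h => by
      simp only [CTLs.Sat]
      constructor
      · rintro ⟨π, hπ, rfl, hsat⟩
        obtain ⟨ρ, hρ, hρ₀, hπρ⟩ := hZ.exists_path hπ h
        exact ⟨ρ, hρ, hρ₀, (hZ.ctlp_sat_iff φ hπρ).1 hsat⟩
      · rintro ⟨ρ, hρ, rfl, hsat⟩
        obtain ⟨π, hπ, hπ₀, hπρ⟩ := hZ.symm.exists_path hρ h
        exact ⟨π, hπ, hπ₀, (hZ.ctlp_sat_iff φ hπρ).2 hsat⟩
  | .al φ, _, _, h => by
      simp only [CTLs.Sat]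
      constructor
      · rintro hall ρ hρ rfl
        obtain ⟨π, hπ, hπ₀, hπρ⟩ := hZ.symm.exists_path hρ h
        exact (hZ.ctlp_sat_iff φ hπρ).1 (hall π hπ hπ₀)
      · rintro hall π hπ rfl
        obtain ⟨ρ, hρ, hρ₀, hπρ⟩ := hZ.exists_path hπ h
        exact (hZ.ctlp_sat_iff φ hπρ).2 (hall ρ hρ hρ₀)

theorem IsBisimulation.ctlp_sat_iff (hZ : IsBisimulation T U Z) :
    ∀ (φ : CTLp AP) {π : ℕ → T.State} {ρ : ℕ → U.State}, (∀ i, Z (π i) (ρ i)) →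
      (CTLp.Sat T φ π ↔ CTLp.Sat U φ ρ)
  | .next Φ, _, _, h => hZ.ctls_sat_iff Φ (h 1)
  | .untl Φ Ψ, _, _, h => exists_congr fun j =>
      and_congr (hZ.ctls_sat_iff Ψ (h j)) (forall₂_congr fun i _ => hZ.ctls_sat_iff Φ (h i))

end

theorem Bisimilar.sat_iff (h : Bisimilar T U) (Φ : CTLs AP) : T.sat Φ ↔ U.sat Φ := by
  obtain ⟨Z, hZ⟩ := h
  constructor
  · intro hT u hu
    obtain ⟨t, ht, htu⟩ := hZ.init_right u hu
    exact (hZ.ctls_sat_iff Φ htu).1 (hT t ht)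
  · intro hU t ht
    obtain ⟨u, hu, htu⟩ := hZ.init_left t ht
    exact (hZ.ctls_sat_iff Φ htu).2 (hU u hu)

def pullbackTS (hZ : IsBisimulation T U Z) {T' : TS AP} {f : T'.State → T.State}
    (hf : IsAbstractionMap T T' f) : TS AP where
  State := {p : T'.State × U.State // Z (f p.1) p.2}
  rel a b := T'.rel a.1.1 b.1.1 ∧ U.rel a.1.2 b.1.2
  init := {a | a.1.1 ∈ T'.init ∧ a.1.2 ∈ U.init}
  label a := U.label a.1.2
  nonempty := by
    obtain ⟨x⟩ := T'.nonempty
    obtain ⟨u, hu⟩ := hZ.left_total (f x)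
    exact ⟨⟨(x, u), hu⟩⟩
  serial := by
    rintro ⟨⟨x, u⟩, hxu⟩
    obtain ⟨x', hx'⟩ := T'.serial x
    obtain ⟨u', hu', hxu'⟩ := hZ.forth _ _ _ hxu ((hf.2.2.1 _ _).2 ⟨x, x', hx', rfl, rfl⟩)
    exact ⟨⟨(x', u'), hxu'⟩, hx', hu'⟩

variable {T' : TS AP} {f : T'.State → T.State}

theorem abs_pullbackTS (hZ : IsBisimulation T U Z) (hf : IsAbstractionMap T T' f) :
    Abs U (pullbackTS hZ hf) := by
  obtain ⟨hf_surj, -, hf_rel, hf_init⟩ := hf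
  refine ⟨fun a => a.1.2, fun u => ?_, fun _ => rfl, fun u u' => ⟨fun huu' => ?_, ?_⟩, ?_⟩
  · obtain ⟨t, htu⟩ := hZ.right_total u
    obtain ⟨x, rfl⟩ := hf_surj t
    exact ⟨⟨(x, u), htu⟩, rfl⟩
  · obtain ⟨t, htu⟩ := hZ.right_total u
    obtain ⟨t', htt', ht'u'⟩ := hZ.back _ _ _ htu huu'
    obtain ⟨x, x', hxx', rfl, rfl⟩ := (hf_rel _ _).1 htt'
    exact ⟨⟨(x, u), htu⟩, ⟨(x', u'), ht'u'⟩, ⟨hxx', huu'⟩, rfl, rfl⟩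
  · rintro ⟨a, b, ⟨-, hab⟩, rfl, rfl⟩
    exact hab
  · ext u
    refine ⟨fun hu => ?_, fun ⟨a, ⟨_, ha⟩, hau⟩ => hau ▸ ha⟩
    obtain ⟨t, ht, htu⟩ := hZ.init_right u hu
    rw [hf_init] at ht
    obtain ⟨x, hx, rfl⟩ := ht
    exact ⟨⟨(x, u), htu⟩, ⟨hx, hu⟩, rfl⟩

theorem bisimilar_pullbackTS (hZ : IsBisimulation T U Z) (hf : IsAbstractionMap T T' f) :
    Bisimilar T' (pullbackTS hZ hf) := by
  obtain ⟨-, hf_label, hf_rel, hf_init⟩ := hf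
  have hf_init' : ∀ x ∈ T'.init, f x ∈ T.init := fun x hx => hf_init ▸ ⟨x, hx, rfl⟩
  refine ⟨fun x a => a.1.1 = x, ⟨?_, fun x => ?_, fun a => ⟨a.1.1, rfl⟩, ?_, ?_, ?_, ?_⟩⟩
  · rintro _ a rfl
    exact (hf_label _).symm.trans (hZ.label_eq _ _ a.2)
  · obtain ⟨u, hu⟩ := hZ.left_total (f x)
    exact ⟨⟨(x, u), hu⟩, rfl⟩
  · rintro _ a x' rfl hxx'
    obtain ⟨u', hu', hx'u'⟩ :=
      hZ.forth _ _ _ a.2 ((hf_rel _ _).2 ⟨a.1.1, x', hxx', rfl, rfl⟩)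
    exact ⟨⟨(x', u'), hx'u'⟩, ⟨hxx', hu'⟩, rfl⟩
  · rintro _ a a' rfl ⟨hxx', -⟩
    exact ⟨a'.1.1, hxx', rfl⟩
  · intro x hx
    obtain ⟨u, hu, hxu⟩ := hZ.init_left (f x) (hf_init' x hx)
    exact ⟨⟨(x, u), hxu⟩, ⟨hx, hu⟩, rfl⟩
  · rintro a ⟨hx, -⟩
    exact ⟨a.1.1, hx, rfl⟩

theorem Bisimilar.exists_abs_bisimilar (h : Bisimilar T U) (hT' : Abs T T') :
    ∃ U', Abs U U' ∧ Bisimilar T' U' :=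
  let ⟨_, hZ⟩ := h
  let ⟨_, hf⟩ := hT'
  ⟨pullbackTS hZ hf, abs_pullbackTS hZ hf, bisimilar_pullbackTS hZ hf⟩

theorem sat_iff_of_bisimilar {V : ℕ → Set {S : TS AP // S ∈ Set.univ}}
    (hV : AdmissibleVal Set.univ V) (φ : MF) {S S' : {S : TS AP // S ∈ Set.univ}}
    (h : Bisimilar S.1 S'.1) :
    MF.Sat (refRel Set.univ) V φ S ↔ MF.Sat (refRel Set.univ) V φ S' := by
  induction φ generalizing S S' with
  | top => exact Iff.rfl
  | var p =>
    obtain ⟨Φ, hΦ⟩ := hV p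
    exact (hΦ S).trans ((h.sat_iff Φ).trans (hΦ S').symm)
  | and φ ψ ihφ ihψ => exact and_congr (ihφ h) (ihψ h)
  | neg φ ih => exact not_congr (ih h)
  | dia φ ih =>
    constructor
    · rintro ⟨T, hST, hT⟩
      obtain ⟨U, hS'U, hTU⟩ := h.exists_abs_bisimilar hST
      exact ⟨⟨U, trivial⟩, hS'U, (ih (S' := ⟨U, trivial⟩) hTU).1 hT⟩
    · rintro ⟨U, hS'U, hU⟩
      obtain ⟨T, hST, hUT⟩ := h.symm.exists_abs_bisimilar hS'U
      exact ⟨⟨T, trivial⟩, hST, (ih (S := ⟨T, trivial⟩) hUT.symm).2 hU⟩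

end Bisimulation

section Deterministic

variable {AP : Type}

def TS.IsDeterministic (D : TS AP) : Prop := ∀ a b c, D.rel a b → D.rel a c → b = c

theorem TS.exists_path (T : TS AP) (s : T.State) : ∃ π, T.IsPath π ∧ π 0 = s := by
  choose next hnext using T.serial
  exact ⟨fun n => next^[n] s,
    fun n => by simp only [Function.iterate_succ_apply']; exact hnext _, rfl⟩

theorem TS.exists_path_of_rel (T : TS AP) {s t : T.State} (h : T.rel s t) :
    ∃ π, T.IsPath π ∧ π 0 = s ∧ π 1 = t := by
  obtain ⟨π, hπ, rfl⟩ := T.exists_path t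
  refine ⟨fun n => Nat.casesOn n s π, fun n => ?_, rfl, rfl⟩
  cases n with
  | zero => exact h
  | succ n => exact hπ n

def TS.pathUnfolding (T : TS AP) : TS AP where
  State := {q : (ℕ → T.State) × ℕ // T.IsPath q.1}
  rel a b := b.1.1 = a.1.1 ∧ b.1.2 = a.1.2 + 1
  init := {a | a.1.2 = 0 ∧ a.1.1 0 ∈ T.init}
  label a := T.label (a.1.1 a.1.2)
  nonempty :=
    let ⟨s⟩ := T.nonempty
    let ⟨π, hπ, _⟩ := T.exists_path s
    ⟨⟨(π, 0), hπ⟩⟩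
  serial a := ⟨⟨(a.1.1, a.1.2 + 1), a.2⟩, rfl, rfl⟩

theorem TS.isDeterministic_pathUnfolding (T : TS AP) : T.pathUnfolding.IsDeterministic := by
  rintro a b c ⟨hb₁, hb₂⟩ ⟨hc₁, hc₂⟩
  exact Subtype.ext (Prod.ext (hb₁.trans hc₁.symm) (hb₂.trans hc₂.symm))

theorem TS.abs_pathUnfolding (T : TS AP) : Abs T T.pathUnfolding := by
  refine ⟨fun a => a.1.1 a.1.2, fun s => ?_, fun _ => rfl, fun s t => ⟨fun hst => ?_, ?_⟩, ?_⟩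
  · obtain ⟨π, hπ, rfl⟩ := T.exists_path s
    exact ⟨⟨(π, 0), hπ⟩, rfl⟩
  · obtain ⟨π, hπ, rfl, rfl⟩ := T.exists_path_of_rel hst
    exact ⟨⟨(π, 0), hπ⟩, ⟨(π, 1), hπ⟩, ⟨rfl, rfl⟩, rfl, rfl⟩
  · rintro ⟨a, b, ⟨hb₁, hb₂⟩, rfl, rfl⟩
    simpa only [hb₁, hb₂] using a.2 a.1.2
  · ext s
    constructor
    · intro hs
      obtain ⟨π, hπ, rfl⟩ := T.exists_path s
      exact ⟨⟨(π, 0), hπ⟩, ⟨rfl, hs⟩, rfl⟩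
    · rintro ⟨⟨⟨π, _⟩, _⟩, ⟨rfl, hπ⟩, rfl⟩
      exact hπ

theorem Abs.bisimilar_of_isDeterministic {D E : TS AP} (hD : D.IsDeterministic)
    (h : Abs D E) : Bisimilar D E := by
  obtain ⟨f, hf_surj, hf_label, hf_rel, hf_init⟩ := h
  refine ⟨fun d e => f e = d, ⟨?_, hf_surj, fun e => ⟨f e, rfl⟩, ?_, ?_, ?_, ?_⟩⟩
  · rintro _ e rfl
    exact hf_label e
  · rintro _ e d' rfl hd'
    obtain ⟨e', he'⟩ := E.serial e
    exact ⟨e', he', hD _ _ _ ((hf_rel _ _).2 ⟨e, e', he', rfl, rfl⟩) hd'⟩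
  · rintro _ e e' rfl he'
    exact ⟨f e', (hf_rel _ _).2 ⟨e, e', he', rfl, rfl⟩, rfl⟩
  · intro d hd
    rw [hf_init] at hd
    obtain ⟨e, he, rfl⟩ := hd
    exact ⟨e, he, rfl⟩
  · intro e he
    exact ⟨f e, hf_init ▸ ⟨e, he, rfl⟩, rfl⟩

theorem validOn_univ_dot1 (φ : MF) :
    ValidOn (Set.univ : Set (TS AP)) (φ.dia.box.imp φ.box.dia) := by
  intro S V hV
  refine MF.sat_imp.2 fun h => ?_
  let D : {S : TS AP // S ∈ Set.univ} := ⟨S.1.pathUnfolding, trivial⟩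
  have hD : ∀ E, refRel Set.univ D E → Bisimilar D.1 E.1 :=
    fun _ => Abs.bisimilar_of_isDeterministic S.1.isDeterministic_pathUnfolding
  have hSD : refRel Set.univ S D := S.1.abs_pathUnfolding
  obtain ⟨E, hDE, hE⟩ := MF.sat_box.1 h D hSD
  have hφD := (sat_iff_of_bisimilar hV φ (hD E hDE)).2 hE
  exact ⟨D, hSD, MF.sat_box.2 fun E hDE => (sat_iff_of_bisimilar hV φ (hD E hDE)).1 hφD⟩

end Deterministic

/-- S4.1 ⊆ MLAR (on the class of all transition systems over AP = ℕ). -/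
theorem stmt_4 : S4Dot1 ⊆ MLAR := by
  refine (KPlus_subset (isNormal_substCore_validOn _) ?_).trans (substCore_subset _)
  rintro _ (rfl | rfl | rfl) σ S V hV
  · exact MF.sat_imp_dia_of_refl (refRel_refl _)
  · exact MF.sat_dia_dia_imp_dia_of_trans (refRel_trans _)
  · exact validOn_univ_dot1 (σ 0) S V hV

end MLAR
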